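/- arXiv:2501.01351 — 5 statements merged into one kernel-verified Lean document; each statement's English description precedes it below -/
import Mathlib

section
/- Let K ∈ ℝ_+^{d×d} and μ ∈ (0,∞)^d be such that KM is irreducible, where M = diag(μ). Then there are at most two functions f : [d] → ℝ_+ satisfying Φ_K f = f. -/
open Matrix

/-- `A` is irreducible: for all `i j` there is `m ≥ 1` with `(A^m) i j > 0`. -/
def MatIrreducible {d : ℕ} (A : Matrix (Fin d) (Fin d) ℝ) : Prop :=
  ∀ i j, ∃ m : ℕ, 1 ≤ m ∧ 0 < (A ^ m) i j

/-- The map `Φ_K f (i) = 1 - exp (-(K M f)_i)` where `M = diag(μ)`. -/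
noncomputable def PhiK {d : ℕ} (κ : Matrix (Fin d) (Fin d) ℝ) (μ : Fin d → ℝ)
    (f : Fin d → ℝ) : Fin d → ℝ :=
  fun i => 1 - Real.exp (-(∑ j, κ i j * μ j * f j))

lemma pow_entries_nonneg {d : ℕ} {A : Matrix (Fin d) (Fin d) ℝ}
    (hA : ∀ i j, 0 ≤ A i j) : ∀ m i j, 0 ≤ (A ^ m) i j := by
  intro m
  induction m with
  | zero =>
    intro i j
    simp only [pow_zero, Matrix.one_apply]
    split <;> norm_num
  | succ n ih =>
    intro i j
    rw [pow_succ, Matrix.mul_apply]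
    exact Finset.sum_nonneg fun k _ => mul_nonneg (ih i k) (hA k j)

/-- positivity propagates backwards along powers. -/
lemma pos_prop {d : ℕ} {A : Matrix (Fin d) (Fin d) ℝ} (hA : ∀ i j, 0 ≤ A i j)
    {f : Fin d → ℝ} (hstep : ∀ i j, 0 < A i j → 0 < f j → 0 < f i) :
    ∀ m i j, 0 < (A ^ m) i j → 0 < f j → 0 < f i := by
  intro m
  induction m with
  | zero =>
    intro i j hij hfj
    simp only [pow_zero, Matrix.one_apply] at hij
    by_cases hij' : i = j
    · subst hij'; exact hfj
    · simp [hij'] at hij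
  | succ n ih =>
    intro i j hij hfj
    rw [pow_succ', Matrix.mul_apply] at hij
    have : ∃ k, 0 < A i k * (A ^ n) k j := by
      by_contra hc
      push_neg at hc
      have : (∑ k, A i k * (A ^ n) k j) ≤ 0 := Finset.sum_nonpos fun k _ => hc k
      linarith
    obtain ⟨k, hk⟩ := this
    rcases mul_pos_iff.mp hk with ⟨h1, h2⟩ | ⟨h1, h2⟩
    · exact hstep i k h1 (ih k j h2 hfj)
    · exact absurd h1 (not_lt.mpr (hA i k))

section main
variable {d : ℕ} {κ : Matrix (Fin d) (Fin d) ℝ} {μ : Fin d → ℝ}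

/-- a nonzero nonnegative fixed point is everywhere positive -/
lemma fixed_pos (hκ : ∀ i j, 0 ≤ κ i j) (hμ : ∀ j, 0 < μ j)
    (hirr : MatIrreducible (κ * Matrix.diagonal μ))
    {f : Fin d → ℝ} (hf0 : ∀ i, 0 ≤ f i) (hff : PhiK κ μ f = f)
    {j : Fin d} (hj : 0 < f j) : ∀ i, 0 < f i := by
  set A := κ * Matrix.diagonal μ with hAdef
  have hAij : ∀ i j, A i j = κ i j * μ j := fun i j => Matrix.mul_diagonal ..
  have hA : ∀ i j, 0 ≤ A i j := fun i j => by
    rw [hAij]; exact mul_nonneg (hκ i j) (hμ j).le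
  have hstep : ∀ i k, 0 < A i k → 0 < f k → 0 < f i := by
    intro i k hik hfk
    have hsum : 0 < ∑ l, κ i l * μ l * f l := by
      have h1 : 0 < κ i k * μ k * f k := by
        rw [← hAij]; exact mul_pos hik hfk
      have h2 : ∀ l ∈ Finset.univ, 0 ≤ κ i l * μ l * f l := fun l _ =>
        mul_nonneg (mul_nonneg (hκ i l) (hμ l).le) (hf0 l)
      calc 0 < κ i k * μ k * f k := h1
        _ ≤ ∑ l, κ i l * μ l * f l := Finset.single_le_sum h2 (Finset.mem_univ k)
    have := congrFun hff i
    simp only [PhiK] at this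
    rw [← this]
    have : Real.exp (-(∑ l, κ i l * μ l * f l)) < 1 := by
      rw [Real.exp_lt_one_iff]; linarith
    linarith
  intro i
  obtain ⟨m, -, hm⟩ := hirr i j
  exact pos_prop hA hstep m i j hm hj

/-- two everywhere-positive fixed points satisfy g ≤ f -/
lemma fixed_le (hκ : ∀ i j, 0 ≤ κ i j) (hμ : ∀ j, 0 < μ j)
    {f g : Fin d → ℝ} (hfpos : ∀ i, 0 < f i) (hgpos : ∀ i, 0 < g i)
    (hff : PhiK κ μ f = f) (hgf : PhiK κ μ g = g) : ∀ i, g i ≤ f i := by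
  intro i
  obtain ⟨i0, -, hi0⟩ :=
    Finset.exists_min_image Finset.univ (fun k => f k / g k) ⟨i, Finset.mem_univ i⟩
  set t := f i0 / g i0 with ht
  have htpos : 0 < t := div_pos (hfpos i0) (hgpos i0)
  have hle : ∀ k, t * g k ≤ f k := by
    intro k
    have := hi0 k (Finset.mem_univ k)
    rwa [le_div_iff₀ (hgpos k)] at this
  have heq : f i0 = t * g i0 := by
    rw [ht, div_mul_cancel₀ _ (hgpos i0).ne']
  have ht1 : 1 ≤ t := by
    by_contra ht1
    push_neg at ht1
    -- S g i0 > 0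
    have hSg : 0 < ∑ l, κ i0 l * μ l * g l := by
      have := congrFun hgf i0
      simp only [PhiK] at this
      by_contra hc
      push_neg at hc
      have : Real.exp (-(∑ l, κ i0 l * μ l * g l)) ≥ 1 := by
        rw [ge_iff_le, Real.one_le_exp_iff]; linarith
      nlinarith [hgpos i0, congrFun hgf i0, this]
    -- S f i0 ≥ t * S g i0
    have hSle : t * (∑ l, κ i0 l * μ l * g l) ≤ ∑ l, κ i0 l * μ l * f l := by
      rw [Finset.mul_sum]
      apply Finset.sum_le_sum
      intro l _
      calc t * (κ i0 l * μ l * g l) = (κ i0 l * μ l) * (t * g l) := by ring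
        _ ≤ (κ i0 l * μ l) * f l :=
            mul_le_mul_of_nonneg_left (hle l) (mul_nonneg (hκ i0 l) (hμ l).le)
    set x := ∑ l, κ i0 l * μ l * g l with hx
    -- strict concavity: exp(-(t*x)) < (1-t) + t * exp(-x)
    have hconv : Real.exp (-(t * x)) < (1 - t) + t * Real.exp (-x) := by
      have hne : (0:ℝ) ≠ -x := by intro h; linarith
      have h := strictConvexOn_exp.2 (Set.mem_univ (0:ℝ)) (Set.mem_univ (-x))
        hne (show (0:ℝ) < 1 - t by linarith) htpos
        (show (1 - t) + t = 1 by ring)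
      simpa [smul_eq_mul, Real.exp_zero] using h
    have hfi0 : f i0 = 1 - Real.exp (-(∑ l, κ i0 l * μ l * f l)) :=
      (congrFun hff i0).symm
    have hgi0 : g i0 = 1 - Real.exp (-x) := (congrFun hgf i0).symm
    have hmono : Real.exp (-(∑ l, κ i0 l * μ l * f l)) ≤ Real.exp (-(t * x)) := by
      apply Real.exp_le_exp.mpr; linarith
    have : t * g i0 < f i0 := by
      rw [hfi0, hgi0]
      calc t * (1 - Real.exp (-x)) = 1 - ((1 - t) + t * Real.exp (-x)) := by ring
        _ < 1 - Real.exp (-(t * x)) := by linarith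
        _ ≤ 1 - Real.exp (-(∑ l, κ i0 l * μ l * f l)) := by linarith
    linarith [heq]
  calc g i = 1 * g i := (one_mul _).symm
    _ ≤ t * g i := mul_le_mul_of_nonneg_right ht1 (hgpos i).le
    _ ≤ f i := hle i

lemma fixed_eq (hκ : ∀ i j, 0 ≤ κ i j) (hμ : ∀ j, 0 < μ j)
    {f g : Fin d → ℝ} (hfpos : ∀ i, 0 < f i) (hgpos : ∀ i, 0 < g i)
    (hff : PhiK κ μ f = f) (hgf : PhiK κ μ g = g) : f = g :=
  funext fun i => le_antisymm (fixed_le hκ hμ hgpos hfpos hgf hff i)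
    (fixed_le hκ hμ hfpos hgpos hff hgf i)

end main

/-- If `KM` is irreducible, there are at most two nonnegative functions `f` with `Φ_K f = f`. -/
theorem at_most_two_fixed_points {d : ℕ} (κ : Matrix (Fin d) (Fin d) ℝ) (μ : Fin d → ℝ)
    (hκ : ∀ i j, 0 ≤ κ i j) (hμ : ∀ j, 0 < μ j)
    (hirr : MatIrreducible (κ * Matrix.diagonal μ)) :
    ∀ f g h : Fin d → ℝ,
      ((∀ i, 0 ≤ f i) ∧ PhiK κ μ f = f) →
      ((∀ i, 0 ≤ g i) ∧ PhiK κ μ g = g) →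
      ((∀ i, 0 ≤ h i) ∧ PhiK κ μ h = h) →
      f = g ∨ g = h ∨ f = h := by
  intro f g h ⟨hf0, hff⟩ ⟨hg0, hgf⟩ ⟨hh0, hhf⟩
  have key : ∀ p : Fin d → ℝ, (∀ i, 0 ≤ p i) → PhiK κ μ p = p →
      (∀ i, p i = 0) ∨ (∀ i, 0 < p i) := by
    intro p hp0 hpf
    by_cases hz : ∀ i, p i = 0
    · exact Or.inl hz
    · push_neg at hz
      obtain ⟨j, hj⟩ := hz
      exact Or.inr (fixed_pos hκ hμ hirr hp0 hpf (lt_of_le_of_ne (hp0 j) (Ne.symm hj)))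
  have zeq : ∀ p q : Fin d → ℝ, (∀ i, p i = 0) → (∀ i, q i = 0) → p = q := by
    intro p q hp hq; funext i; rw [hp i, hq i]
  rcases key f hf0 hff with hF | hF <;> rcases key g hg0 hgf with hG | hG <;>
    rcases key h hh0 hhf with hH | hH
  · exact Or.inl (zeq f g hF hG)
  · exact Or.inl (zeq f g hF hG)
  · exact Or.inr (Or.inr (zeq f h hF hH))
  · exact Or.inr (Or.inl (fixed_eq hκ hμ hG hH hgf hhf))
  · exact Or.inr (Or.inl (zeq g h hG hH))
  · exact Or.inr (Or.inr (fixed_eq hκ hμ hF hH hff hhf))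
  · exact Or.inl (fixed_eq hκ hμ hF hG hff hgf)
  · exact Or.inl (fixed_eq hκ hμ hF hG hff hgf)
end

section
/- Let K ∈ ℝ_+^{d×d} and μ ∈ (0,∞)^d be such that KM is irreducible, where M = diag(μ). Then every function f : [d] → ℝ_+ with Φ_K f = f is either identically 0 or satisfies f(i) > 0 for every i ∈ [d]. -/
open Matrix

/-- If `KM` is irreducible, every nonnegative fixed point of `Φ_K` is identically `0`
or strictly positive everywhere. -/
theorem fixed_points_zero_or_positive {d : ℕ} (κ : Matrix (Fin d) (Fin d) ℝ) (μ : Fin d → ℝ)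
    (hκ : ∀ i j, 0 ≤ κ i j) (hμ : ∀ j, 0 < μ j)
    (hirr : MatIrreducible (κ * Matrix.diagonal μ))
    (f : Fin d → ℝ) (hf0 : ∀ i, 0 ≤ f i) (hfix : PhiK κ μ f = f) :
    f = 0 ∨ ∀ i, 0 < f i := by
  set A := κ * Matrix.diagonal μ with hA
  have hAent : ∀ i j, A i j = κ i j * μ j := by
    intro i j; simp [hA, Matrix.mul_diagonal]
  have hAnn : ∀ i j, 0 ≤ A i j := by
    intro i j; rw [hAent]; exact mul_nonneg (hκ i j) (hμ j).le
  have hpownn : ∀ m (i j : Fin d), 0 ≤ (A ^ m) i j := by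
    intro m
    induction m with
    | zero => intro i j; simp [Matrix.one_apply]; positivity
    | succ n ih =>
      intro i j
      rw [pow_succ, Matrix.mul_apply]
      exact Finset.sum_nonneg fun k _ => mul_nonneg (ih i k) (hAnn k j)
  -- key: f i = 0 and A i k > 0 implies f k = 0
  have key : ∀ i k, f i = 0 → 0 < A i k → f k = 0 := by
    intro i k hfi hAik
    have hfe := congrFun hfix i
    simp only [PhiK] at hfe
    rw [hfi] at hfe
    have hT : Real.exp (-(∑ j, κ i j * μ j * f j)) = 1 := by linarith
    have hT0 : (∑ j, κ i j * μ j * f j) = 0 := by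
      have hTnn : 0 ≤ ∑ j, κ i j * μ j * f j :=
        Finset.sum_nonneg fun j _ =>
          mul_nonneg (mul_nonneg (hκ i j) (hμ j).le) (hf0 j)
      rcases lt_or_eq_of_le hTnn with h | h
      · exfalso
        have : Real.exp (-(∑ j, κ i j * μ j * f j)) < 1 :=
          Real.exp_lt_one_iff.mpr (by linarith)
        linarith
      · exact h.symm
    have hterm : ∀ j ∈ Finset.univ, 0 ≤ κ i j * μ j * f j := fun j _ =>
      mul_nonneg (mul_nonneg (hκ i j) (hμ j).le) (hf0 j)
    have hk0 : κ i k * μ k * f k = 0 :=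
      (Finset.sum_eq_zero_iff_of_nonneg hterm).mp hT0 k (Finset.mem_univ k)
    have hAik' : 0 < κ i k * μ k := by rwa [hAent] at hAik
    exact (mul_eq_zero.mp hk0).resolve_left (ne_of_gt hAik')
  have main : ∀ m (i j : Fin d), f i = 0 → 0 < (A ^ m) i j → f j = 0 := by
    intro m
    induction m with
    | zero =>
      intro i j hfi hp
      simp only [pow_zero, Matrix.one_apply] at hp
      by_cases h : i = j
      · exact h ▸ hfi
      · simp [h] at hp
    | succ n ih =>
      intro i j hfi hp
      rw [pow_succ'] at hp
      rw [Matrix.mul_apply] at hp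
      have hex : ∃ k, 0 < A i k * (A ^ n) k j := by
        by_contra hc
        push_neg at hc
        have : ∑ k, A i k * (A ^ n) k j ≤ 0 := Finset.sum_nonpos fun k _ => hc k
        linarith
      obtain ⟨k, hk⟩ := hex
      have hAik : 0 < A i k := by
        rcases lt_or_eq_of_le (hAnn i k) with h | h
        · exact h
        · rw [← h] at hk; simp at hk
      have hrest : 0 < (A ^ n) k j := by
        rcases lt_or_eq_of_le (hpownn n k j) with h | h
        · exact h
        · rw [← h] at hk; simp at hk
      exact ih k j (key i k hfi hAik) hrest
  by_cases hz : ∀ i, f i = 0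
  · left; funext i; exact hz i
  · right
    push_neg at hz
    obtain ⟨j, hj⟩ := hz
    intro i
    rcases lt_or_eq_of_le (hf0 i) with h | h
    · exact h
    · exfalso
      obtain ⟨m, -, hm⟩ := hirr i j
      exact hj (main m i j h.symm hm)
end

section
/- Let K ∈ ℝ_+^{d×d} and μ ∈ (0,∞)^d be such that KM is irreducible (M = diag(μ)) and the Perron–Frobenius eigenvalue of KM exceeds 1, and let ρ ∈ (0,∞)^d be the strictly positive fixed point of Φ_K. Then the matrix J = K M (I − diag(ρ)) − I is invertible. -/
open Matrix

/-- Suppose `KM` is irreducible with Perron–Frobenius eigenvalue `λ₁ > 1` (the eigenvalue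
with a strictly positive eigenvector), and let `ρ` be the strictly positive fixed point of
`Φ_K`. Then `J = K M (I - diag ρ) - I` is invertible. -/
theorem J_invertible {d : ℕ}
    (κ : Matrix (Fin d) (Fin d) ℝ) (μ : Fin d → ℝ)
    (hκ : ∀ i j, 0 ≤ κ i j) (hμ : ∀ j, 0 < μ j)
    (hirr : MatIrreducible (κ * Matrix.diagonal μ))
    (lam₁ : ℝ) (hlam₁ : 1 < lam₁) (a : Fin d → ℝ) (ha : ∀ i, 0 < a i)
    (heig : (κ * Matrix.diagonal μ).mulVec a = lam₁ • a)
    (ρ : Fin d → ℝ) (hρpos : ∀ i, 0 < ρ i) (hρfix : PhiK κ μ ρ = ρ) :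
    IsUnit (κ * Matrix.diagonal μ * (1 - Matrix.diagonal ρ) - 1) := by
  classical
  set B : Matrix (Fin d) (Fin d) ℝ := κ * Matrix.diagonal μ * (1 - Matrix.diagonal ρ) with hBdef
  set t : Fin d → ℝ := fun i => ∑ j, κ i j * μ j * ρ j with ht
  have hfix : ∀ i, 1 - Real.exp (-(t i)) = ρ i := fun i => congrFun hρfix i
  have htpos : ∀ i, 0 < t i := by
    intro i
    have h1 : Real.exp (-(t i)) < 1 := by have := hfix i; have := hρpos i; linarith
    have h2 : -(t i) < 0 := by
      by_contra h
      push_neg at h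
      have := Real.one_le_exp h
      linarith
    linarith
  set v : Fin d → ℝ := fun i => Real.exp (t i) - 1 with hv
  have htv : ∀ i, t i < v i := by
    intro i
    have := Real.add_one_lt_exp (htpos i).ne'
    simp only [hv]; linarith
  have hvpos : ∀ i, 0 < v i := fun i => lt_trans (htpos i) (htv i)
  have hρlt : ∀ j, 1 - ρ j = Real.exp (-(t j)) := by intro j; have := hfix j; linarith
  have hBentry : ∀ i j, B i j = κ i j * (μ j * (1 - ρ j)) := by
    intro i j
    have h1 : (1 : Matrix (Fin d) (Fin d) ℝ) - Matrix.diagonal ρ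
        = Matrix.diagonal (fun j => 1 - ρ j) := by
      rw [← Matrix.diagonal_one, Matrix.diagonal_sub]
    rw [hBdef, Matrix.mul_assoc, h1, Matrix.diagonal_mul_diagonal, Matrix.mul_diagonal]
  have hBnn : ∀ i j, 0 ≤ B i j := by
    intro i j
    rw [hBentry]
    have : 0 ≤ 1 - ρ j := by rw [hρlt j]; exact (Real.exp_pos _).le
    exact mul_nonneg (hκ i j) (mul_nonneg (hμ j).le this)
  have hBv : ∀ i, ∑ j, B i j * v j = t i := by
    intro i
    rw [ht]
    refine Finset.sum_congr rfl fun j _ => ?_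
    rw [hBentry, hρlt j]
    have hmul : Real.exp (-(t j)) * v j = ρ j := by
      show Real.exp (-(t j)) * (Real.exp (t j) - 1) = ρ j
      rw [mul_sub, ← Real.exp_add, neg_add_cancel, Real.exp_zero, mul_one, hfix j]
    linear_combination (κ i j * μ j) * hmul
  -- injectivity via maximum principle
  have hdet : (B - 1).det ≠ 0 := by
    intro hdet0
    obtain ⟨x, hx0, hx⟩ := Matrix.exists_mulVec_eq_zero_iff.mpr hdet0
    have hx' : B.mulVec x = x := by
      rwa [Matrix.sub_mulVec, Matrix.one_mulVec, sub_eq_zero] at hx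
    have hfixx : ∀ i, x i = ∑ j, B i j * x j := by
      intro i
      have := congrFun hx' i
      simpa [Matrix.mulVec, dotProduct] using this.symm
    obtain ⟨i0, _, hi0⟩ := Finset.exists_max_image Finset.univ (fun i => |x i| / v i)
      ⟨(Classical.choice (by
        rcases Function.ne_iff.mp hx0 with ⟨i, _⟩
        exact ⟨i⟩ : Nonempty (Fin d))), Finset.mem_univ _⟩
    set s : ℝ := |x i0| / v i0 with hs
    have hle : ∀ j, |x j| ≤ s * v j := by
      intro j
      have := hi0 j (Finset.mem_univ j)
      rw [div_le_div_iff₀ (hvpos j) (hvpos i0)] at this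
      rw [hs, div_mul_eq_mul_div, le_div_iff₀ (hvpos i0)]
      linarith
    have hspos : 0 < s := by
      rcases Function.ne_iff.mp hx0 with ⟨i, hi⟩
      have h1 : 0 < |x i| := abs_pos.mpr hi
      have := hle i
      nlinarith [hvpos i, hvpos i0]
    have hcontr : |x i0| < |x i0| := by
      calc |x i0| = |∑ j, B i0 j * x j| := by rw [← hfixx i0]
        _ ≤ ∑ j, |B i0 j * x j| := Finset.abs_sum_le_sum_abs _ _
        _ = ∑ j, B i0 j * |x j| := by
            refine Finset.sum_congr rfl fun j _ => ?_
            rw [abs_mul, abs_of_nonneg (hBnn i0 j)]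
        _ ≤ ∑ j, B i0 j * (s * v j) := by
            refine Finset.sum_le_sum fun j _ => ?_
            exact mul_le_mul_of_nonneg_left (hle j) (hBnn i0 j)
        _ = s * ∑ j, B i0 j * v j := by
            rw [Finset.mul_sum]
            exact Finset.sum_congr rfl fun j _ => by ring
        _ = s * t i0 := by rw [hBv i0]
        _ < s * v i0 := by exact (mul_lt_mul_iff_right₀ hspos).mpr (htv i0)
        _ = |x i0| := by rw [hs, div_mul_cancel₀ _ (hvpos i0).ne']
    exact lt_irrefl _ hcontr
  rw [Matrix.isUnit_iff_isUnit_det]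
  exact isUnit_iff_ne_zero.mpr hdet
end

section
/- Let K ∈ ℝ_+^{d×d} and μ ∈ (0,∞)^d be such that KM is irreducible (M = diag(μ)) and the Perron–Frobenius eigenvalue of KM exceeds 1, and let ρ ∈ (0,∞)^d be the strictly positive fixed point of Φ_K. Then {t ∈ ℝ_+^d : φ(t) = 0} = {0, t^0}, where t^0 = K M ρ; moreover 1 − e^{−t^0_i} = ρ_i for every i ∈ [d]. -/
open Matrix

/-- The map `φ : ℝ₊^d → ℝ^d`, `φ_i(t) = -t_i + ∑_j κ_{i,j} μ_j (1 - e^{-t_j})`. -/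
noncomputable def phiMap {d : ℕ} (κ : Matrix (Fin d) (Fin d) ℝ) (μ : Fin d → ℝ)
    (t : Fin d → ℝ) : Fin d → ℝ :=
  fun i => -t i + ∑ j, κ i j * μ j * (1 - Real.exp (-t j))

/-- strict concavity: `1 - exp (-(c*x)) > c * (1 - exp (-x))` for `0 < c < 1`, `0 < x`. -/
lemma aux_strict_concave {c x : ℝ} (hc0 : 0 < c) (hc1 : c < 1) (hx : 0 < x) :
    c * (1 - Real.exp (-x)) < 1 - Real.exp (-(c * x)) := by
  have h := strictConvexOn_exp.2 (Set.mem_univ (-x)) (Set.mem_univ 0)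
    (by linarith) hc0 (by linarith : (0:ℝ) < 1 - c) (by ring)
  simp only [smul_eq_mul, mul_zero, add_zero, Real.exp_zero, mul_one] at h
  have : Real.exp (-(c * x)) < c * Real.exp (-x) + (1 - c) := by
    rw [show -(c*x) = c * (-x) by ring]; exact h
  linarith

/-- A nonzero nonnegative fixed point of `Φ_K` is strictly positive (uses irreducibility). -/
lemma aux_fixed_pos {d : ℕ} (κ : Matrix (Fin d) (Fin d) ℝ) (μ : Fin d → ℝ)
    (hκ : ∀ i j, 0 ≤ κ i j) (hμ : ∀ j, 0 < μ j)
    (hirr : MatIrreducible (κ * Matrix.diagonal μ))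
    (f : Fin d → ℝ) (hf0 : ∀ i, 0 ≤ f i) (hfix : PhiK κ μ f = f) (hne : f ≠ 0) :
    ∀ i, 0 < f i := by
  obtain ⟨j₀, hj₀⟩ : ∃ j, 0 < f j := by
    by_contra h
    push_neg at h
    exact hne (funext fun j => le_antisymm (h j) (hf0 j))
  -- If f k = 0 then all terms κ k j μ j f j vanish
  have hzero : ∀ k, f k = 0 → ∀ j, 0 < f j → (κ * Matrix.diagonal μ) k j = 0 := by
    intro k hk j hj
    have hfk : (1 : ℝ) - Real.exp (-(∑ j, κ k j * μ j * f j)) = 0 := by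
      have := congrFun hfix k
      simpa [PhiK, hk] using this
    have hsum : (∑ j, κ k j * μ j * f j) = 0 := by
      have : Real.exp (-(∑ j, κ k j * μ j * f j)) = Real.exp 0 := by
        rw [Real.exp_zero]; linarith
      have := Real.exp_injective this
      linarith
    have hterm : κ k j * μ j * f j = 0 := by
      have := (Finset.sum_eq_zero_iff_of_nonneg (fun l _ =>
        mul_nonneg (mul_nonneg (hκ k l) (hμ l).le) (hf0 l))).mp hsum j (Finset.mem_univ j)
      exact this
    have hκkj : κ k j = 0 := by
      rcases mul_eq_zero.mp hterm with h | h
      · rcases mul_eq_zero.mp h with h | h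
        · exact h
        · exact absurd h (hμ j).ne'
      · exact absurd h hj.ne'
    rw [Matrix.mul_diagonal, hκkj, zero_mul]
  -- (KM)^m k j = 0 for all m, whenever f k = 0 and f j > 0
  have hpow : ∀ m : ℕ, ∀ k, f k = 0 → ∀ j, 0 < f j →
      ((κ * Matrix.diagonal μ) ^ m) k j = 0 := by
    intro m
    induction m with
    | zero =>
      intro k hk j hj
      have hne : k ≠ j := fun h => by rw [h] at hk; exact hj.ne' hk
      simp [Matrix.one_apply_ne hne]
    | succ m ih =>
      intro k hk j hj
      rw [pow_succ', Matrix.mul_apply]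
      apply Finset.sum_eq_zero
      intro l _
      rcases (hf0 l).lt_or_eq with hl | hl
      · rw [hzero k hk l hl, zero_mul]
      · rw [ih l hl.symm j hj, mul_zero]
  intro i
  rcases (hf0 i).lt_or_eq with h | h
  · exact h
  · exfalso
    obtain ⟨m, _, hm⟩ := hirr i j₀
    rw [hpow m i h.symm j₀ hj₀] at hm
    exact lt_irrefl 0 hm
/-- Comparison: two strictly positive fixed points satisfy `ρ ≤ f`. -/
lemma aux_fixed_le {d : ℕ} (κ : Matrix (Fin d) (Fin d) ℝ) (μ : Fin d → ℝ)
    (hκ : ∀ i j, 0 ≤ κ i j) (hμ : ∀ j, 0 < μ j)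
    (f ρ : Fin d → ℝ) (hfpos : ∀ i, 0 < f i) (hρpos : ∀ i, 0 < ρ i)
    (hffix : PhiK κ μ f = f) (hρfix : PhiK κ μ ρ = ρ) :
    ∀ i, ρ i ≤ f i := by
  intro i
  have : Nonempty (Fin d) := ⟨i⟩
  obtain ⟨i₀, -, hi₀⟩ := Finset.exists_min_image Finset.univ (fun j => f j / ρ j)
    ⟨i, Finset.mem_univ i⟩
  set c := f i₀ / ρ i₀ with hc
  have hcpos : 0 < c := div_pos (hfpos i₀) (hρpos i₀)
  have hcle : ∀ j, c * ρ j ≤ f j := by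
    intro j
    have h1 : c ≤ f j / ρ j := hi₀ j (Finset.mem_univ j)
    calc c * ρ j ≤ (f j / ρ j) * ρ j := by
          exact mul_le_mul_of_nonneg_right h1 (hρpos j).le
      _ = f j := div_mul_cancel₀ _ (hρpos j).ne'
  -- It suffices to show 1 ≤ c
  suffices h1c : 1 ≤ c by
    calc ρ i = 1 * ρ i := (one_mul _).symm
      _ ≤ c * ρ i := mul_le_mul_of_nonneg_right h1c (hρpos i).le
      _ ≤ f i := hcle i
  by_contra hlt
  push_neg at hlt
  -- sums
  have hSρpos : 0 < ∑ j, κ i₀ j * μ j * ρ j := by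
    have := congrFun hρfix i₀
    simp only [PhiK] at this
    by_contra h
    push_neg at h
    have hle : Real.exp 0 ≤ Real.exp (-(∑ j, κ i₀ j * μ j * ρ j)) :=
      Real.exp_le_exp.mpr (by linarith)
    rw [Real.exp_zero] at hle
    have := hρpos i₀
    linarith
  have hsum_le : c * (∑ j, κ i₀ j * μ j * ρ j) ≤ ∑ j, κ i₀ j * μ j * f j := by
    rw [Finset.mul_sum]
    apply Finset.sum_le_sum
    intro j _
    have := hcle j
    have hnn : 0 ≤ κ i₀ j * μ j := mul_nonneg (hκ i₀ j) (hμ j).le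
    calc c * (κ i₀ j * μ j * ρ j) = (κ i₀ j * μ j) * (c * ρ j) := by ring
      _ ≤ (κ i₀ j * μ j) * f j := mul_le_mul_of_nonneg_left (hcle j) hnn
      _ = κ i₀ j * μ j * f j := rfl
  have hρi₀ : ρ i₀ = 1 - Real.exp (-(∑ j, κ i₀ j * μ j * ρ j)) :=
    (congrFun hρfix i₀).symm
  have hfi₀ : f i₀ = 1 - Real.exp (-(∑ j, κ i₀ j * μ j * f j)) :=
    (congrFun hffix i₀).symm
  have hstrict := aux_strict_concave hcpos hlt hSρpos
  have hmono : Real.exp (-(∑ j, κ i₀ j * μ j * f j)) ≤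
      Real.exp (-(c * ∑ j, κ i₀ j * μ j * ρ j)) :=
    Real.exp_le_exp.mpr (by linarith)
  have hfc : f i₀ = c * ρ i₀ := by
    rw [hc, div_mul_cancel₀ _ (hρpos i₀).ne']
  -- f i₀ = c ρ i₀ but f i₀ > c ρ i₀, contradiction
  have : c * ρ i₀ < f i₀ := by
    calc c * ρ i₀ = c * (1 - Real.exp (-(∑ j, κ i₀ j * μ j * ρ j))) := by rw [hρi₀]
      _ < 1 - Real.exp (-(c * ∑ j, κ i₀ j * μ j * ρ j)) := hstrict
      _ ≤ 1 - Real.exp (-(∑ j, κ i₀ j * μ j * f j)) := by linarith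
      _ = f i₀ := hfi₀.symm
  rw [hfc] at this
  exact lt_irrefl _ this

/-- Suppose `KM` is irreducible with Perron–Frobenius eigenvalue `λ₁ > 1` (the eigenvalue
with a strictly positive eigenvector), and let `ρ` be the strictly positive fixed point of
`Φ_K`. Then `{t ∈ ℝ₊^d : φ(t) = 0} = {0, t⁰}` where `t⁰ = K M ρ`, and
`1 - e^{-t⁰_i} = ρ_i` for every `i`. -/
theorem zeros_of_phi_eq_pair {d : ℕ}
    (κ : Matrix (Fin d) (Fin d) ℝ) (μ : Fin d → ℝ)
    (hκ : ∀ i j, 0 ≤ κ i j) (hμ : ∀ j, 0 < μ j)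
    (hirr : MatIrreducible (κ * Matrix.diagonal μ))
    (lam₁ : ℝ) (hlam₁ : 1 < lam₁) (a : Fin d → ℝ) (ha : ∀ i, 0 < a i)
    (heig : (κ * Matrix.diagonal μ).mulVec a = lam₁ • a)
    (ρ : Fin d → ℝ) (hρpos : ∀ i, 0 < ρ i) (hρfix : PhiK κ μ ρ = ρ) :
    {t : Fin d → ℝ | (∀ i, 0 ≤ t i) ∧ phiMap κ μ t = 0} =
        {0, (κ * Matrix.diagonal μ).mulVec ρ} ∧
      ∀ i, 1 - Real.exp (-((κ * Matrix.diagonal μ).mulVec ρ i)) = ρ i := by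
  have hmv : ∀ (x : Fin d → ℝ) i,
      (κ * Matrix.diagonal μ).mulVec x i = ∑ j, κ i j * μ j * x j := by
    intro x i
    simp [Matrix.mulVec, dotProduct, Matrix.mul_diagonal, mul_assoc]
  have h2 : ∀ i, 1 - Real.exp (-((κ * Matrix.diagonal μ).mulVec ρ i)) = ρ i := by
    intro i
    rw [hmv]
    exact congrFun hρfix i
  refine ⟨?_, h2⟩
  ext t
  simp only [Set.mem_setOf_eq, Set.mem_insert_iff, Set.mem_singleton_iff]
  constructor
  · rintro ⟨ht0, htφ⟩
    set f : Fin d → ℝ := fun j => 1 - Real.exp (-t j) with hf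
    have hteq : ∀ i, t i = ∑ j, κ i j * μ j * f j := by
      intro i
      have := congrFun htφ i
      simp only [phiMap, Pi.zero_apply] at this
      linarith
    have hfnn : ∀ j, 0 ≤ f j := by
      intro j
      have : Real.exp (-t j) ≤ Real.exp 0 := Real.exp_le_exp.mpr (by linarith [ht0 j])
      rw [Real.exp_zero] at this
      simp only [hf]; linarith
    have hffix : PhiK κ μ f = f := by
      funext i
      simp only [PhiK, hf]
      rw [← hteq i]
    by_cases hzero : f = 0
    · left
      funext i
      have := hteq i
      rw [hzero] at this
      simpa using this
    · right
      have hfpos := aux_fixed_pos κ μ hκ hμ hirr f hfnn hffix hzero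
      have h1 := aux_fixed_le κ μ hκ hμ f ρ hfpos hρpos hffix hρfix
      have h2' := aux_fixed_le κ μ hκ hμ ρ f hρpos hfpos hρfix hffix
      have hfρ : f = ρ := funext fun j => le_antisymm (h2' j) (h1 j)
      funext i
      rw [hteq i, hmv, ← hfρ]
  · rintro (rfl | rfl)
    · refine ⟨fun i => le_refl 0, ?_⟩
      funext i
      simp [phiMap]
    · constructor
      · intro i
        rw [hmv]
        exact Finset.sum_nonneg fun j _ =>
          mul_nonneg (mul_nonneg (hκ i j) (hμ j).le) (hρpos j).le
      · funext i
        simp only [phiMap, Pi.zero_apply]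
        have : ∀ j, 1 - Real.exp (-(κ * Matrix.diagonal μ).mulVec ρ j) = ρ j := h2
        calc -(κ * Matrix.diagonal μ).mulVec ρ i
              + ∑ j, κ i j * μ j * (1 - Real.exp (-(κ * Matrix.diagonal μ).mulVec ρ j))
            = -(κ * Matrix.diagonal μ).mulVec ρ i + ∑ j, κ i j * μ j * ρ j := by
              congr 1
              exact Finset.sum_congr rfl fun j _ => by rw [this j]
          _ = 0 := by rw [hmv]; ring
end

section
/- Fix d ≥ 1, α ≥ 0, ε > 0, C < ∞ and ω : ℕ → (0,∞) with ω(n) → ∞ and ω(n) = o(n^{1/2}). For each n, let X_0^{(n)} ≥ X_1^{(n)} ≥ … ≥ X_n^{(n)} ≥ 0 be random variables and V_0^{(n)},…,V_n^{(n)} random vectors in ℝ^d with ‖V_j^{(n)}‖ ≤ α X_j^{(n)} almost surely for all j. Assume (1) P( X_0^{(n)} > ε n and Σ_{j=1}^n X_j^{(n)} ≤ C n ) → 1, and (2) P( X_1^{(n)} ≤ ω(n) ) → 1. Let E_0, …, E_n be i.i.d. rate-1 exponential random variables independent of ( (X_j^{(n)}), (V_j^{(n)}) ) and set ξ_l^{(n)}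 = E_l / X_l^{(n)} (with ξ_l^{(n)} = ∞ if X_l^{(n)} = 0), so that conditionally given the X's the ξ_l^{(n)} are independent exponentials with rates X_l^{(n)}. Then n^{1/2} Σ_{l ≥ 1 : ξ_l^{(n)} < ξ_0^{(n)}} n^{-1} V_l^{(n)} → 0 in probability and n^{1/2} ξ_0^{(n)} → 0 in probability. -/
open MeasureTheory ProbabilityTheory Filter
open scoped Classical ENNReal

/-- The event `ξ_l < ξ_0`, where `ξ_l = E_l / X_l` (with `ξ_l = ∞` when `X_l = 0`). -/
def xiLt {Ω : Type*} (X E : Ω → ℝ) (X₀ E₀ : Ω → ℝ) (ω : Ω) : Prop :=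
  0 < X ω ∧ (X₀ ω = 0 ∨ E ω / X ω < E₀ ω / X₀ ω)

/-!
Fix `n` and work on the event where `X₀ > εn`, `X_j ≤ X₁ ≤ w(n)` for `j ≥ 1` and
`∑_{j ≥ 1} X_j ≤ Cn`. There `ξ_l < ξ₀` forces `E_l < (w(n) / εn) E₀`, an event of probability at
most `w(n) / εn` for two independent rate-1 exponentials. Since the `E`'s are independent of the
`X`'s and `‖V_l‖ ≤ α X_l`, the expected size of `∑_{ξ_l < ξ₀} V_l` on this event is at most
`α (w(n) / εn) Cn`, and Markov's inequality bounds the probability that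
`√n ‖∑_{ξ_l < ξ₀} n⁻¹ V_l‖ ≥ δ` by `α C w(n) / (ε δ √n) → 0`. On the same event `√n ξ₀ ≥ δ`
forces `E₀ > δ ε √n`, which has probability `exp (-δ ε √n)`.
-/

namespace ProbabilityTheory

open Set Real

section ExpMeasure

variable {r : ℝ}

lemma expMeasure_Iic_le (hr : 0 < r) (x : ℝ) : expMeasure r (Iic x) ≤ ENNReal.ofReal (r * x) := by
  have := isProbabilityMeasure_expMeasure hr
  rw [← ofReal_cdf, cdf_expMeasure_eq hr]
  split_ifs with hx
  · exact ENNReal.ofReal_le_ofReal (by linarith [add_one_le_exp (-(r * x))])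
  · simp

lemma expMeasure_Ioi (hr : 0 < r) {x : ℝ} (hx : 0 ≤ x) :
    expMeasure r (Ioi x) = ENNReal.ofReal (exp (-(r * x))) := by
  have := isProbabilityMeasure_expMeasure hr
  rw [← compl_Iic, prob_compl_eq_one_sub measurableSet_Iic, ← ofReal_cdf,
    cdf_expMeasure_eq hr, if_pos hx, ← ENNReal.ofReal_one,
    ← ENNReal.ofReal_sub _ (by simp [exp_le_one_iff]; positivity)]
  ring_nf

lemma ae_nonneg_expMeasure (hr : 0 < r) : ∀ᵐ x ∂expMeasure r, 0 ≤ x :=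
  ae_iff.2 <| measure_mono_null (t := Iic 0) (fun x (hx : ¬ 0 ≤ x) => (not_le.1 hx).le)
    (nonpos_iff_eq_zero.1 (by simpa using expMeasure_Iic_le hr 0))

lemma lintegral_ofReal_expMeasure (hr : 0 < r) :
    ∫⁻ x, ENNReal.ofReal x ∂expMeasure r = ENNReal.ofReal r⁻¹ := by
  rw [lintegral_eq_lintegral_meas_lt _ (ae_nonneg_expMeasure hr) aemeasurable_id,
    setLIntegral_congr_fun measurableSet_Ioi (f := fun t => expMeasure r {a | t < a})
      (g := fun t => ENNReal.ofReal (exp (-(r * t))))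
      (fun t (ht : 0 < t) => expMeasure_Ioi hr ht.le),
    ← ofReal_integral_eq_lintegral_ofReal]
  · simp_rw [← neg_mul]
    rw [integral_exp_mul_Ioi (neg_lt_zero.2 hr)]
    simp
  · simp_rw [← neg_mul]
    exact integrableOn_exp_mul_Ioi (neg_lt_zero.2 hr) 0
  · exact Eventually.of_forall fun t => (exp_pos _).le

lemma expMeasure_prod_lt_mul_le (hr : 0 < r) {c : ℝ} (hc : 0 ≤ c) :
    ((expMeasure r).prod (expMeasure r)) {p : ℝ × ℝ | p.2 < c * p.1} ≤ ENNReal.ofReal c := by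
  have := isProbabilityMeasure_expMeasure hr
  rw [Measure.prod_apply (measurableSet_lt measurable_snd (measurable_fst.const_mul c))]
  calc ∫⁻ x, expMeasure r (Iio (c * x)) ∂expMeasure r
      ≤ ∫⁻ x, ENNReal.ofReal (r * c) * ENNReal.ofReal x ∂expMeasure r := by
        refine lintegral_mono fun x => (measure_mono Iio_subset_Iic_self).trans ?_
        rw [← ENNReal.ofReal_mul (by positivity), mul_assoc]
        exact expMeasure_Iic_le hr _
    _ = ENNReal.ofReal c := by
        rw [lintegral_const_mul _ (by fun_prop), lintegral_ofReal_expMeasure hr,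
          ← ENNReal.ofReal_mul (by positivity)]
        field_simp

end ExpMeasure

section Independence

variable {Ω β γ ι : Type*} [MeasurableSpace Ω] [MeasurableSpace β] [MeasurableSpace γ]
  {μ : Measure Ω}

lemma lintegral_sum_mul_le_of_indepFun {Z : Ω → β} {W : Ω → γ} (hZ : Measurable Z)
    (hW : Measurable W) (hZW : IndepFun Z W μ) (s : Finset ι) {f : ι → β → ℝ≥0∞}
    {g : ι → γ → ℝ≥0∞} (hf : ∀ i, Measurable (f i)) (hg : ∀ i, Measurable (g i)) {p : ℝ≥0∞}
    (hp : ∀ i ∈ s, ∫⁻ ω, g i (W ω) ∂μ ≤ p) :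
    ∫⁻ ω, ∑ i ∈ s, f i (Z ω) * g i (W ω) ∂μ ≤ p * ∫⁻ ω, ∑ i ∈ s, f i (Z ω) ∂μ := by
  rw [lintegral_finsetSum (f := fun i ω => f i (Z ω) * g i (W ω)) _
      fun i _ => ((hf i).comp hZ).mul ((hg i).comp hW),
    lintegral_finsetSum (f := fun i ω => f i (Z ω)) _ fun i _ => (hf i).comp hZ, Finset.mul_sum]
  refine Finset.sum_le_sum fun i hi => ?_
  have hindep : IndepFun (f i ∘ Z) (g i ∘ W) μ := hZW.comp (hf i) (hg i)
  calc ∫⁻ ω, f i (Z ω) * g i (W ω) ∂μ = (∫⁻ ω, f i (Z ω) ∂μ) * ∫⁻ ω, g i (W ω) ∂μ :=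
        lintegral_mul_eq_lintegral_mul_lintegral_of_indepFun''
          ((hf i).comp hZ).aemeasurable ((hg i).comp hW).aemeasurable hindep
    _ ≤ p * ∫⁻ ω, f i (Z ω) ∂μ := by
        rw [mul_comm]
        exact mul_le_mul_left (hp i hi) _

lemma measure_lt_mul_le_of_indepFun [IsFiniteMeasure μ] {E E' : Ω → ℝ} (hE : Measurable E)
    (hE' : Measurable E') (hEE' : IndepFun E E' μ) {r : ℝ} (hr : 0 < r) (hlaw : μ.map E = expMeasure r)
    (hlaw' : μ.map E' = expMeasure r) {c : ℝ} (hc : 0 ≤ c) :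
    μ {ω | E' ω < c * E ω} ≤ ENNReal.ofReal c := by
  have hmeas : MeasurableSet {p : ℝ × ℝ | p.2 < c * p.1} :=
    measurableSet_lt measurable_snd (measurable_fst.const_mul c)
  have hprod : μ.map (fun ω => (E ω, E' ω)) = (expMeasure r).prod (expMeasure r) := by
    rw [(indepFun_iff_map_prod_eq_prod_map_map hE.aemeasurable hE'.aemeasurable).1 hEE',
      hlaw, hlaw']
  calc μ {ω | E' ω < c * E ω} = μ.map (fun ω => (E ω, E' ω)) {p | p.2 < c * p.1} :=
        (Measure.map_apply (hE.prodMk hE') hmeas).symm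
    _ ≤ ENNReal.ofReal c := hprod ▸ expMeasure_prod_lt_mul_le hr hc

end Independence

end ProbabilityTheory

section Race

variable {Ω ι : Type*} [Fintype ι] [DecidableEq ι] {i₀ : ι} {X E : ι → Ω → ℝ}

lemma filter_xiLt_subset {ω : Ω} {a b : ℝ} (ha : 0 < a) (hX₀ : a < X i₀ ω)
    (hXb : ∀ l ≠ i₀, X l ω ≤ b) (hE₀ : 0 ≤ E i₀ ω) :
    Finset.univ.filter (fun l => l ≠ i₀ ∧ xiLt (X l) (E l) (X i₀) (E i₀) ω)
      ⊆ Finset.univ.filter (fun l => l ≠ i₀ ∧ E l ω < b / a * E i₀ ω) := by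
  intro l
  simp only [Finset.mem_filter, Finset.mem_univ, true_and]
  rintro ⟨hl, hXl, h0 | hlt⟩
  · exact absurd h0 (ha.trans hX₀).ne'
  refine ⟨hl, ?_⟩
  have hX₀pos : 0 < X i₀ ω := ha.trans hX₀
  calc E l ω = E l ω / X l ω * X l ω := by field_simp
    _ < E i₀ ω / X i₀ ω * X l ω := by gcongr
    _ ≤ E i₀ ω / a * b := by gcongr; exact hXb l hl
    _ = b / a * E i₀ ω := by ring

/-- With `c = b / a`, this dominates `∑_{ξ_l < ξ_{i₀}} X_l` wherever `X_{i₀} > a`, `X_l ≤ b` and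
`∑_{l ≠ i₀} X_l ≤ s`; the truncation to the last event is what makes its mean at most `c s`. -/
noncomputable def raceSum (i₀ : ι) (X E : ι → Ω → ℝ) (c s : ℝ) (ω : Ω) : ℝ≥0∞ :=
  ∑ l ∈ Finset.univ.filter (· ≠ i₀),
    {ω | ∑ j ∈ Finset.univ.filter (· ≠ i₀), X j ω ≤ s}.indicator
        (fun ω => ENNReal.ofReal (X l ω)) ω
      * {ω | E l ω < c * E i₀ ω}.indicator 1 ω

lemma ofReal_norm_sum_xiLt_le_raceSum {F : Type*} [SeminormedAddCommGroup F] {V : ι → Ω → F}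
    {ω : Ω} {α a b s : ℝ} (hα : 0 ≤ α) (hXnonneg : ∀ l, 0 ≤ X l ω)
    (hV : ∀ l, ‖V l ω‖ ≤ α * X l ω) (ha : 0 < a) (hX₀ : a < X i₀ ω)
    (hs : ∑ l ∈ Finset.univ.filter (· ≠ i₀), X l ω ≤ s) (hXb : ∀ l ≠ i₀, X l ω ≤ b)
    (hE₀ : 0 ≤ E i₀ ω) :
    ENNReal.ofReal
        ‖∑ l ∈ Finset.univ.filter (fun l => l ≠ i₀ ∧ xiLt (X l) (E l) (X i₀) (E i₀) ω), V l ω‖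
      ≤ ENNReal.ofReal α * raceSum i₀ X E (b / a) s ω := by
  calc _ ≤ ENNReal.ofReal (α * ∑ l ∈ Finset.univ.filter
            (fun l => l ≠ i₀ ∧ xiLt (X l) (E l) (X i₀) (E i₀) ω), X l ω) := by
        refine ENNReal.ofReal_le_ofReal ((norm_sum_le _ _).trans ?_)
        rw [Finset.mul_sum]
        exact Finset.sum_le_sum fun l _ => hV l
    _ ≤ ENNReal.ofReal (α * ∑ l ∈ Finset.univ.filter
            (fun l => l ≠ i₀ ∧ E l ω < b / a * E i₀ ω), X l ω) := by
        refine ENNReal.ofReal_le_ofReal (mul_le_mul_of_nonneg_left ?_ hα)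
        exact Finset.sum_le_sum_of_subset_of_nonneg (filter_xiLt_subset ha hX₀ hXb hE₀)
          fun l _ _ => hXnonneg l
    _ = ENNReal.ofReal α * raceSum i₀ X E (b / a) s ω := by
        rw [ENNReal.ofReal_mul hα, ENNReal.ofReal_sum_of_nonneg fun l _ => hXnonneg l,
          ← Finset.filter_filter, Finset.sum_filter]
        simp [raceSum, Set.indicator_apply, hs]

end Race

section ExponentialRace

open Set Real

variable {Ω : Type*} [MeasurableSpace Ω] {μ : Measure Ω}

lemma measure_xi_ge_le {X₀ E₀ : Ω → ℝ} (hE₀ : Measurable E₀) (hlaw : μ.map E₀ = expMeasure 1)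
    {a m δ : ℝ} (ha : 0 < a) (hm : 0 < m) (hδ : 0 < δ) :
    μ {ω | X₀ ω = 0 ∨ δ ≤ m * (E₀ ω / X₀ ω)}
      ≤ μ {ω | X₀ ω ≤ a} + ENNReal.ofReal (exp (-(δ * a / m))) := by
  have hsub : {ω | X₀ ω = 0 ∨ δ ≤ m * (E₀ ω / X₀ ω)} ⊆ {ω | X₀ ω ≤ a} ∪ E₀ ⁻¹' Ioi (δ * a / m) := by
    intro ω hω
    rcases le_or_gt (X₀ ω) a with haX | haX
    · exact Or.inl haX
    have hX : 0 < X₀ ω := ha.trans haX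
    have hδE : δ * X₀ ω ≤ m * E₀ ω := by
      rcases hω with h0 | h
      · exact absurd h0 hX.ne'
      · rwa [← mul_div_assoc, le_div_iff₀ hX] at h
    refine Or.inr ((div_lt_iff₀ hm).2 ?_)
    nlinarith
  calc μ {ω | X₀ ω = 0 ∨ δ ≤ m * (E₀ ω / X₀ ω)}
      ≤ μ {ω | X₀ ω ≤ a} + μ (E₀ ⁻¹' Ioi (δ * a / m)) :=
        (measure_mono hsub).trans (measure_union_le _ _)
    _ = μ {ω | X₀ ω ≤ a} + ENNReal.ofReal (exp (-(δ * a / m))) := by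
        rw [← Measure.map_apply hE₀ measurableSet_Ioi, hlaw,
          expMeasure_Ioi one_pos (by positivity), one_mul]

variable {ι : Type*} [Fintype ι] [DecidableEq ι] {i₀ : ι} {X E : ι → Ω → ℝ}

lemma measurable_raceSum (hX : ∀ l, Measurable (X l)) (hE : ∀ l, Measurable (E l)) (c s : ℝ) :
    Measurable (raceSum i₀ X E c s) := by
  refine Finset.measurable_sum _ fun l _ => Measurable.mul ?_ ?_
  · exact (hX l).ennreal_ofReal.indicator
      (measurableSet_le (Finset.measurable_sum _ fun j _ => hX j) measurable_const)
  · exact measurable_one.indicator (measurableSet_lt (hE l) ((hE i₀).const_mul c))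

variable [IsProbabilityMeasure μ]

lemma lintegral_raceSum_le (hX : ∀ l, Measurable (X l)) (hE : ∀ l, Measurable (E l))
    (hXnonneg : ∀ l ω, 0 ≤ X l ω) (hXE : IndepFun (fun ω l => X l ω) (fun ω l => E l ω) μ)
    (hEindep : iIndepFun E μ) (hElaw : ∀ l, μ.map (E l) = expMeasure 1) {c : ℝ} (hc : 0 ≤ c)
    (s : ℝ) :
    ∫⁻ ω, raceSum i₀ X E c s ω ∂μ ≤ ENNReal.ofReal c * ENNReal.ofReal s := by
  set A : Set (ι → ℝ) := {x | ∑ j ∈ Finset.univ.filter (· ≠ i₀), x j ≤ s}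
  have hA : MeasurableSet A :=
    measurableSet_le (Finset.measurable_sum _ fun j _ => measurable_pi_apply j) measurable_const
  have hsum : ∀ x : ι → ℝ, (∀ l, 0 ≤ x l) →
      ∑ l ∈ Finset.univ.filter (· ≠ i₀), A.indicator (fun x => ENNReal.ofReal (x l)) x
        ≤ ENNReal.ofReal s := by
    intro x hx
    by_cases hxA : x ∈ A
    · simp only [Set.indicator_of_mem hxA]
      rw [← ENNReal.ofReal_sum_of_nonneg fun l _ => hx l]
      exact ENNReal.ofReal_le_ofReal hxA
    · simp [Set.indicator_of_notMem hxA]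
  have hprob : ∀ l ∈ Finset.univ.filter (· ≠ i₀),
      ∫⁻ ω, {ω | E l ω < c * E i₀ ω}.indicator 1 ω ∂μ ≤ ENNReal.ofReal c := by
    intro l hl
    rw [lintegral_indicator_one (measurableSet_lt (hE l) ((hE i₀).const_mul c))]
    exact measure_lt_mul_le_of_indepFun (hE i₀) (hE l)
      (hEindep.indepFun (Finset.mem_filter.1 hl).2.symm) one_pos (hElaw i₀) (hElaw l) hc
  calc _ ≤ ENNReal.ofReal c * ∫⁻ ω, ∑ l ∈ Finset.univ.filter (· ≠ i₀),
          A.indicator (fun x => ENNReal.ofReal (x l)) (fun j => X j ω) ∂μ :=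
      lintegral_sum_mul_le_of_indepFun (measurable_pi_lambda _ hX) (measurable_pi_lambda _ hE)
        hXE _ (fun l => (measurable_pi_apply l).ennreal_ofReal.indicator hA)
        (g := fun l => {e : ι → ℝ | e l < c * e i₀}.indicator 1)
        (fun l => measurable_one.indicator
          (measurableSet_lt (measurable_pi_apply l) (by fun_prop)))
        hprob
    _ ≤ ENNReal.ofReal c * ENNReal.ofReal s := by
      gcongr
      calc _ ≤ ∫⁻ _, ENNReal.ofReal s ∂μ := lintegral_mono fun ω => hsum _ fun l => hXnonneg l ω
        _ = ENNReal.ofReal s := by simp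

theorem measure_norm_sum_xiLt_ge_le {F : Type*} [SeminormedAddCommGroup F] {V : ι → Ω → F}
    (hX : ∀ l, Measurable (X l)) (hE : ∀ l, Measurable (E l)) (hXnonneg : ∀ l ω, 0 ≤ X l ω)
    (hXE : IndepFun (fun ω l => X l ω) (fun ω l => E l ω) μ) (hEindep : iIndepFun E μ)
    (hElaw : ∀ l, μ.map (E l) = expMeasure 1) {α : ℝ} (hα : 0 ≤ α)
    (hVX : ∀ l, ∀ᵐ ω ∂μ, ‖V l ω‖ ≤ α * X l ω) {a b s δ : ℝ} (ha : 0 < a) (hb : 0 ≤ b)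
    (hδ : 0 < δ) :
    μ {ω | δ ≤ ‖∑ l ∈ Finset.univ.filter (fun l => l ≠ i₀ ∧ xiLt (X l) (E l) (X i₀) (E i₀) ω),
        V l ω‖}
      ≤ μ {ω | ¬(a < X i₀ ω ∧ ∑ l ∈ Finset.univ.filter (· ≠ i₀), X l ω ≤ s)}
        + μ {ω | ¬∀ l ≠ i₀, X l ω ≤ b} + ENNReal.ofReal (α * (b / a) * s / δ) := by
  set G := raceSum i₀ X E (b / a) s
  have hE₀ : ∀ᵐ ω ∂μ, 0 ≤ E i₀ ω :=
    ae_of_ae_map (hE i₀).aemeasurable (hElaw i₀ ▸ ae_nonneg_expMeasure one_pos)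
  have hsub : ({ω | δ ≤ ‖∑ l ∈ Finset.univ.filter
        (fun l => l ≠ i₀ ∧ xiLt (X l) (E l) (X i₀) (E i₀) ω), V l ω‖} : Set Ω)
      ≤ᵐ[μ] ({ω | ¬(a < X i₀ ω ∧ ∑ l ∈ Finset.univ.filter (· ≠ i₀), X l ω ≤ s)}
        ∪ {ω | ¬∀ l ≠ i₀, X l ω ≤ b}
        ∪ {ω | ENNReal.ofReal δ ≤ ENNReal.ofReal α * G ω} : Set Ω) := by
    filter_upwards [ae_all_iff.2 hVX, hE₀] with ω hV hE₀ hω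
    by_cases hgood : a < X i₀ ω ∧ ∑ l ∈ Finset.univ.filter (· ≠ i₀), X l ω ≤ s
    swap
    · exact Or.inl (Or.inl hgood)
    by_cases hXb : ∀ l ≠ i₀, X l ω ≤ b
    swap
    · exact Or.inl (Or.inr hXb)
    exact Or.inr ((ENNReal.ofReal_le_ofReal hω).trans (ofReal_norm_sum_xiLt_le_raceSum hα
      (hXnonneg · ω) hV ha hgood.1 hgood.2 hXb hE₀))
  have hmarkov : μ {ω | ENNReal.ofReal δ ≤ ENNReal.ofReal α * G ω}
      ≤ ENNReal.ofReal (α * (b / a) * s / δ) :=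
    calc _ ≤ (∫⁻ ω, ENNReal.ofReal α * G ω ∂μ) / ENNReal.ofReal δ :=
          meas_ge_le_lintegral_div ((measurable_raceSum hX hE _ _).const_mul _).aemeasurable
            (by simpa using hδ) ENNReal.ofReal_ne_top
      _ ≤ ENNReal.ofReal α * (ENNReal.ofReal (b / a) * ENNReal.ofReal s) / ENNReal.ofReal δ := by
          rw [lintegral_const_mul _ (measurable_raceSum hX hE _ _)]
          gcongr
          exact lintegral_raceSum_le hX hE hXnonneg hXE hEindep hElaw (div_nonneg hb ha.le) s
      _ = ENNReal.ofReal (α * (b / a) * s / δ) := by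
          rw [ENNReal.ofReal_div_of_pos hδ, ENNReal.ofReal_mul (by positivity),
            ENNReal.ofReal_mul hα, mul_assoc]
  calc _ ≤ _ := measure_mono_ae hsub
    _ ≤ _ := (measure_union_le _ _).trans (add_le_add (measure_union_le _ _) hmarkov)

end ExponentialRace

lemma tendsto_measure_compl_of_tendsto_measure_one {κ : Type*} {L : Filter κ} {Ω : κ → Type*}
    [∀ n, MeasurableSpace (Ω n)] {P : ∀ n, Measure (Ω n)} [∀ n, IsProbabilityMeasure (P n)]
    {s : ∀ n, Set (Ω n)} (hs : ∀ n, MeasurableSet (s n))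
    (h : Tendsto (fun n => P n (s n)) L (nhds 1)) :
    Tendsto (fun n => P n (s n)ᶜ) L (nhds 0) := by
  simp_rw [prob_compl_eq_one_sub (hs _)]
  exact (ENNReal.tendsto_const_sub_nhds_zero_iff ENNReal.one_ne_top fun n => prob_le_one).2 h

lemma norm_sqrt_smul_sum_inv_smul {ι F : Type*} [NormedAddCommGroup F] [NormedSpace ℝ F]
    (n : ℕ) (s : Finset ι) (v : ι → F) :
    ‖Real.sqrt n • ∑ l ∈ s, (n : ℝ)⁻¹ • v l‖ = ‖∑ l ∈ s, v l‖ / Real.sqrt n := by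
  rw [← Finset.smul_sum, smul_smul, norm_smul, Real.norm_of_nonneg (by positivity),
    ← div_eq_mul_inv, Real.sqrt_div_self', one_div, inv_mul_eq_div]

lemma tendsto_ofReal_mul_div_mul_div_sqrt {w : ℕ → ℝ}
    (hw : w =o[atTop] fun n : ℕ => Real.sqrt n) (α ε C δ : ℝ) :
    Tendsto (fun n : ℕ => ENNReal.ofReal (α * (w n / (ε * n)) * (C * n) / (δ * Real.sqrt n)))
      atTop (nhds 0) := by
  have hratio : Tendsto (fun n => α * C / (ε * δ) * (w n / Real.sqrt n)) atTop (nhds 0) := by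
    simpa using hw.tendsto_div_nhds_zero.const_mul (α * C / (ε * δ))
  have heq : (fun n => α * C / (ε * δ) * (w n / Real.sqrt n)) =ᶠ[atTop]
      fun n => α * (w n / (ε * n)) * (C * n) / (δ * Real.sqrt n) := by
    filter_upwards [eventually_gt_atTop 0] with n hn
    have : (n : ℝ) ≠ 0 := by positivity
    field_simp
  simpa using ENNReal.tendsto_ofReal (hratio.congr' heq)

lemma tendsto_ofReal_exp_neg_mul_div_sqrt {δ ε : ℝ} (hδ : 0 < δ) (hε : 0 < ε) :
    Tendsto (fun n : ℕ => ENNReal.ofReal (Real.exp (-(δ * (ε * n) / Real.sqrt n))))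
      atTop (nhds 0) := by
  simp only [mul_div_assoc, Real.div_sqrt, ← mul_assoc]
  simpa using ENNReal.tendsto_ofReal (Real.tendsto_exp_neg_atTop_nhds_zero.comp
    ((Real.tendsto_sqrt_atTop.comp tendsto_natCast_atTop_atTop).const_mul_atTop
      (mul_pos hδ hε)))

theorem small_components_contribution_negligible_general {d : ℕ}
    (α : ℝ) (hα : 0 ≤ α) (ε C : ℝ) (hε : 0 < ε)
    (w : ℕ → ℝ) (hwpos : ∀ n, 0 < w n)
    (hwlittle : w =o[atTop] fun n : ℕ => Real.sqrt n)
    (Ω : ℕ → Type) [∀ n, MeasurableSpace (Ω n)]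
    (P : ∀ n, Measure (Ω n)) [∀ n, IsProbabilityMeasure (P n)]
    (X : ∀ n, Fin (n + 1) → Ω n → ℝ)
    (V : ∀ n, Fin (n + 1) → Ω n → (Fin d → ℝ))
    (hXmeas : ∀ n l, Measurable (X n l))
    (hXnonneg : ∀ n l ω, 0 ≤ X n l ω)
    (hXmono : ∀ n (l l' : Fin (n + 1)), l ≤ l' → ∀ ω, X n l' ω ≤ X n l ω)
    (hVX : ∀ n l, ∀ᵐ ω ∂(P n), ‖V n l ω‖ ≤ α * X n l ω)
    -- hypothesis (1): `P(X₀ > ε n and ∑_{j=1}^n X_j ≤ C n) → 1`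
    (h1 : Tendsto (fun n => P n {ω | ε * n < X n 0 ω ∧
        (∑ l ∈ Finset.univ.filter (fun l : Fin (n + 1) => l ≠ 0), X n l ω) ≤ C * n})
      atTop (nhds 1))
    -- hypothesis (2): `P(X₁ ≤ ω(n)) → 1`
    (h2 : Tendsto (fun n => P n {ω | X n 1 ω ≤ w n}) atTop (nhds 1))
    -- `E`'s are i.i.d. rate-1 exponentials, independent of the pair `((X_j), (V_j))`
    (E : ∀ n, Fin (n + 1) → Ω n → ℝ)
    (hEmeas : ∀ n l, Measurable (E n l))
    (hEindep : ∀ n, iIndepFun (E n) (P n))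
    (hElaw : ∀ n l, Measure.map (E n l) (P n) = expMeasure 1)
    (hEX : ∀ n, IndepFun (fun ω (l : Fin (n + 1)) => (X n l ω, V n l ω))
        (fun ω (l : Fin (n + 1)) => E n l ω) (P n)) :
    -- `√n ∑_{l ≥ 1 : ξ_l < ξ_0} n⁻¹ V_l → 0` in probability, and `√n ξ_0 → 0` in probability
    (∀ δ : ℝ, 0 < δ → Tendsto (fun n => P n {ω | δ ≤
        ‖Real.sqrt n • ∑ l ∈ Finset.univ.filter
            (fun l : Fin (n + 1) => l ≠ 0 ∧ xiLt (X n l) (E n l) (X n 0) (E n 0) ω),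
          (n : ℝ)⁻¹ • V n l ω‖}) atTop (nhds 0)) ∧
    (∀ δ : ℝ, 0 < δ → Tendsto (fun n => P n {ω | X n 0 ω = 0 ∨
        δ ≤ Real.sqrt n * (E n 0 ω / X n 0 ω)}) atTop (nhds 0)) := by
  have hA := tendsto_measure_compl_of_tendsto_measure_one
    (s := fun n => {ω | ε * n < X n 0 ω ∧
        (∑ l ∈ Finset.univ.filter (fun l : Fin (n + 1) => l ≠ 0), X n l ω) ≤ C * n})
    (fun n => (measurableSet_lt measurable_const (hXmeas n 0)).inter
      (measurableSet_le (Finset.measurable_sum _ fun l _ => hXmeas n l) measurable_const)) h1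
  have hB := tendsto_measure_compl_of_tendsto_measure_one
    (fun n => measurableSet_le (hXmeas n 1) measurable_const) h2
  refine ⟨fun δ hδ => ?_, fun δ hδ => ?_⟩
  · have hbound := (hA.add hB).add (tendsto_ofReal_mul_div_mul_div_sqrt hwlittle α ε C δ)
    rw [add_zero, add_zero] at hbound
    refine tendsto_nhds_bot_mono hbound ?_
    filter_upwards [eventually_gt_atTop 0] with n hn
    simp_rw [norm_sqrt_smul_sum_inv_smul, le_div_iff₀ (Real.sqrt_pos.2 (Nat.cast_pos.2 hn))]
    have hXE : IndepFun (fun ω l => X n l ω) (fun ω l => E n l ω) (P n) :=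
      (hEX n).comp (measurable_pi_lambda _ fun l => measurable_fst.comp (measurable_pi_apply l))
        measurable_id
    refine (measure_norm_sum_xiLt_ge_le (i₀ := 0) (hXmeas n) (hEmeas n) (hXnonneg n) hXE
      (hEindep n) (hElaw n) hα (hVX n) (a := ε * n) (s := C * n) (δ := δ * Real.sqrt n)
      (by positivity) (hwpos n).le (by positivity)).trans
      (add_le_add_left (add_le_add_right (measure_mono ?_) _) _)
    exact fun ω hω hX₁ => hω fun l hl => (hXmono n 1 l (Fin.one_le_of_ne_zero hl) ω).trans hX₁
  · have hbound := hA.add (tendsto_ofReal_exp_neg_mul_div_sqrt hδ hε)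
    rw [add_zero] at hbound
    refine tendsto_nhds_bot_mono hbound ?_
    filter_upwards [eventually_gt_atTop 0] with n hn
    refine (measure_xi_ge_le (hEmeas n 0) (hElaw n 0) (a := ε * n) (by positivity)
      (Real.sqrt_pos.2 (Nat.cast_pos.2 hn)) hδ).trans (add_le_add_left (measure_mono ?_) _)
    exact fun ω hω h => not_lt.2 hω h.1

theorem small_components_contribution_negligible {d : ℕ}
    (α : ℝ) (hα : 0 ≤ α) (ε C : ℝ) (hε : 0 < ε)
    (w : ℕ → ℝ) (hwpos : ∀ n, 0 < w n)
    (hwtop : Tendsto w atTop atTop)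
    (hwlittle : w =o[atTop] fun n : ℕ => Real.sqrt n)
    (Ω : ℕ → Type) [∀ n, MeasurableSpace (Ω n)]
    (P : ∀ n, Measure (Ω n)) [∀ n, IsProbabilityMeasure (P n)]
    (X : ∀ n, Fin (n + 1) → Ω n → ℝ)
    (V : ∀ n, Fin (n + 1) → Ω n → (Fin d → ℝ))
    (hXmeas : ∀ n l, Measurable (X n l)) (hVmeas : ∀ n l, Measurable (V n l))
    (hXnonneg : ∀ n l ω, 0 ≤ X n l ω)
    (hXmono : ∀ n (l l' : Fin (n + 1)), l ≤ l' → ∀ ω, X n l' ω ≤ X n l ω)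
    (hVX : ∀ n l, ∀ᵐ ω ∂(P n), ‖V n l ω‖ ≤ α * X n l ω)
    -- hypothesis (1): `P(X₀ > ε n and ∑_{j=1}^n X_j ≤ C n) → 1`
    (h1 : Tendsto (fun n => P n {ω | ε * n < X n 0 ω ∧
        (∑ l ∈ Finset.univ.filter (fun l : Fin (n + 1) => l ≠ 0), X n l ω) ≤ C * n})
      atTop (nhds 1))
    -- hypothesis (2): `P(X₁ ≤ ω(n)) → 1`
    (h2 : Tendsto (fun n => P n {ω | X n 1 ω ≤ w n}) atTop (nhds 1))
    -- `E`'s are i.i.d. rate-1 exponentials, independent of the pair `((X_j), (V_j))`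
    (E : ∀ n, Fin (n + 1) → Ω n → ℝ)
    (hEmeas : ∀ n l, Measurable (E n l))
    (hEindep : ∀ n, iIndepFun (E n) (P n))
    (hElaw : ∀ n l, Measure.map (E n l) (P n) = expMeasure 1)
    (hEX : ∀ n, IndepFun (fun ω (l : Fin (n + 1)) => (X n l ω, V n l ω))
        (fun ω (l : Fin (n + 1)) => E n l ω) (P n)) :
    -- `√n ∑_{l ≥ 1 : ξ_l < ξ_0} n⁻¹ V_l → 0` in probability, and `√n ξ_0 → 0` in probability
    (∀ δ : ℝ, 0 < δ → Tendsto (fun n => P n {ω | δ ≤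
        ‖Real.sqrt n • ∑ l ∈ Finset.univ.filter
            (fun l : Fin (n + 1) => l ≠ 0 ∧ xiLt (X n l) (E n l) (X n 0) (E n 0) ω),
          (n : ℝ)⁻¹ • V n l ω‖}) atTop (nhds 0)) ∧
    (∀ δ : ℝ, 0 < δ → Tendsto (fun n => P n {ω | X n 0 ω = 0 ∨
        δ ≤ Real.sqrt n * (E n 0 ω / X n 0 ω)}) atTop (nhds 0)) :=
  small_components_contribution_negligible_general α hα ε C hε w hwpos hwlittle Ω P X V hXmeas
    hXnonneg hXmono hVX h1 h2 E hEmeas hEindep hElaw hEX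
end
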